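/- Let n = 3^k with k ≥ 1. Then the short cubic function f₁ = (1, 3^{k−1}+1, 2·3^{k−1}+1) is fixed by every element of G_n, and it is the only cubic MRS function in n variables fixed by every element of G_n; that is, the orbit of f₁ under the action of G_n has size 1, and every other orbit has size greater than 1. -/

import Mathlib

/-- Boolean functions in `n` variables, with variables indexed by `ZMod n`
(index `i : ZMod n` corresponds to the variable `x_{i+1}` in 1-indexed notation,
so that "`a Mod n`" arithmetic on subscripts becomes arithmetic in `ZMod n`). -/
abbrev BF (n : ℕ) := (ZMod n → ZMod 2) → ZMod 2

/-- The cubic MRS function `(1,j,k)` in `n` variables: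
`x ↦ Σ_{i=1}^n x_i x_{(i+j-1) Mod n} x_{(i+k-1) Mod n}`, the sum taken in `GF(2)`. -/
def cubicMRS (n : ℕ) [NeZero n] (j k : ℕ) : BF n :=
  fun x => ∑ i : ZMod n,
    x i * x (i + ((j - 1 : ℕ) : ZMod n)) * x (i + ((k - 1 : ℕ) : ZMod n))

/-- `C_n`: the set of all cubic MRS functions `(1,j,k)`, `1 < j < k ≤ n`, in `n` variables. -/
def cubicSet (n : ℕ) [NeZero n] : Set (BF n) :=
  {f | ∃ j k : ℕ, 1 < j ∧ j < k ∧ k ≤ n ∧ f = cubicMRS n j k}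

/-- The set of cubic MRS functions `(1,j,k)` with `1 < j, k ≤ n`, `j ≠ k`. -/
def cubicSetNe (n : ℕ) [NeZero n] : Set (BF n) :=
  {f | ∃ j k : ℕ, 1 < j ∧ j ≤ n ∧ 1 < k ∧ k ≤ n ∧ j ≠ k ∧ f = cubicMRS n j k}

/-- The action of a permutation `μ` of the variables on a Boolean function:
`(μ·f)(x₁,…,xₙ) = f(x_{μ(1)},…,x_{μ(n)})`. -/
def permAct {n : ℕ} (μ : Equiv.Perm (ZMod n)) (f : BF n) : BF n :=
  fun x => f (fun i => x (μ i))

/-- A Boolean function is rotation symmetric if it is invariant under the cyclic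
shift of the variables. -/
def rotSym {n : ℕ} (f : BF n) : Prop :=
  ∀ x : ZMod n → ZMod 2, f (fun i => x (i + 1)) = f x

/-- A permutation `μ` preserves rotation symmetry (for cubic MRS functions in `n`
variables) if `μ·f` is rotation symmetric for every cubic MRS function `f`. -/
def preservesRS (n : ℕ) [NeZero n] (μ : Equiv.Perm (ZMod n)) : Prop :=
  ∀ f ∈ cubicSetNe n, rotSym (permAct μ f)

/-- The permutation `σ_{τ,n} : i ↦ ((i-1)τ + 1) Mod n` of the variables, for `τ` a
unit mod `n`; in the 0-indexed coordinates used here it is `i ↦ τ·i` on `ZMod n`. -/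
def sigmaPerm {n : ℕ} (u : (ZMod n)ˣ) : Equiv.Perm (ZMod n) where
  toFun := fun i => (u : ZMod n) * i
  invFun := fun i => ((u⁻¹ : (ZMod n)ˣ) : ZMod n) * i
  left_inv := fun i => by simp [← mul_assoc]
  right_inv := fun i => by simp [← mul_assoc]

/-- The orbit of a Boolean function `f` under the action of the group
`G_n = {σ_{τ,n} : gcd(τ,n) = 1}`. -/
def orbit (n : ℕ) [NeZero n] (f : BF n) : Set (BF n) :=
  {g | ∃ u : (ZMod n)ˣ, g = permAct (sigmaPerm u) f}

/-- The set of orbits of the action of `G_n` on the set `C_n` of cubic MRS functions. -/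
def orbitsOn (n : ℕ) [NeZero n] : Set (Set (BF n)) :=
  {S | ∃ f ∈ cubicSet n, S = orbit n f}

/-! Write the cubic MRS function with offsets `a, b` as `x ↦ ∑ᵢ xᵢ x_{i+a} x_{i+b}`. Evaluated at
the indicator of `T = {0, a, b}` it counts the translations `i` with `i + T = T`, a subgroup of
odd order; hence if the function is fixed by `σ₂ : i ↦ 2i`, some translate of `{0, 2a, 2b}` lies
in `T`, i.e. an affine map `x ↦ i + 2x` sends `T` into itself. On a set of three elements two of
the first four iterates of any `x` coincide, which gives `(2^p - 2^q)(x + i) = 0` with `p ≠ q < 4`;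
as `3 ^ k` is prime to `2` and `7`, this forces `3x = 0` on `T`. So `{a, b}` is the set
`{3^(k-1), 2·3^(k-1)}` of nonzero `3`-torsion points, which every unit permutes. -/

open Finset Pointwise

def mrs (n : ℕ) [NeZero n] (a b : ZMod n) : BF n :=
  fun x => ∑ i : ZMod n, x i * x (i + a) * x (i + b)

theorem odd_card_vadd_finset_eq_self {G : Type*} [AddGroup G] [Fintype G] [DecidableEq G]
    (hG : Odd (Nat.card G)) (T : Finset G) : Odd #{g : G | g +ᵥ T = T} := by
  have h : Nat.card (AddAction.stabilizer G T) = #{g : G | g +ᵥ T = T} := by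
    rw [Nat.card_eq_fintype_card, ← Fintype.card_subtype]; rfl
  exact h ▸ hG.of_dvd_nat (AddSubgroup.card_addSubgroup_dvd_card _)

theorem mul_add_eq_zero_of_forall_add_two_mul_mem {R : Type*} [CommRing R] {T : Finset R}
    (hT : #T ≤ 3) {i : R} (hi : ∀ x ∈ T, i + 2 * x ∈ T) {x : R} (hx : x ∈ T) :
    168 * (x + i) = 0 := by
  -- the iterates of `x` are `2 ^ m * (x + i) - i`; two of the first four coincide
  have iter_mem : ∀ m : ℕ, 2 ^ m * (x + i) - i ∈ T := by
    intro m
    induction m with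
    | zero => simpa using hx
    | succ m ih => convert hi _ ih using 1; ring
  obtain ⟨p, hp, q, hq, hpq, heq⟩ := exists_ne_map_eq_of_card_lt_of_maps_to
    (s := range 4) (by simpa using hT.trans_lt (by norm_num)) fun m _ => iter_mem m
  -- `168` is a common multiple of all `2 ^ p - 2 ^ q` with `p, q < 4`
  obtain ⟨c, hc⟩ : ((2 : ℤ) ^ p - 2 ^ q) ∣ 168 := by
    rw [mem_range] at hp hq
    interval_cases p <;> interval_cases q <;> first | omega | decide
  have hcast : (168 : R) = ((2 : R) ^ p - 2 ^ q) * c := by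
    simpa using congrArg (Int.cast : ℤ → R) hc
  rw [hcast, mul_comm _ (c : R), mul_assoc]
  linear_combination (c : R) * heq

section
variable {n : ℕ} [NeZero n]

theorem cubicMRS_eq_mrs (j k : ℕ) :
    cubicMRS n j k = mrs n ((j - 1 : ℕ) : ZMod n) ((k - 1 : ℕ) : ZMod n) := rfl

theorem mrs_comm (a b : ZMod n) : mrs n a b = mrs n b a :=
  funext fun _ => sum_congr rfl fun _ _ => mul_right_comm _ _ _

theorem permAct_sigmaPerm_mrs (u : (ZMod n)ˣ) (a b : ZMod n) :
    permAct (sigmaPerm u) (mrs n a b) = mrs n (u * a) (u * b) := by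
  funext x
  rw [mrs, ← Equiv.sum_comp (sigmaPerm u)]
  exact sum_congr rfl fun i _ => by simp [sigmaPerm, mul_add]

theorem mrs_apply_indicator (a b : ZMod n) (T : Finset (ZMod n)) :
    mrs n a b (fun i => if i ∈ T then 1 else 0) = #{i | i ∈ T ∧ i + a ∈ T ∧ i + b ∈ T} := by
  rw [← sum_boole]
  exact sum_congr rfl fun i _ => by simp only [ite_and]; split_ifs <;> simp

theorem exists_translate_mem_of_mrs_eq (hn : Odd n) {a b c d : ZMod n}
    (h : mrs n c d = mrs n a b) :
    ∃ i, i ∈ ({0, a, b} : Finset (ZMod n)) ∧ i + c ∈ ({0, a, b} : Finset (ZMod n)) ∧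
      i + d ∈ ({0, a, b} : Finset (ZMod n)) := by
  set T : Finset (ZMod n) := {0, a, b}
  -- `i + T ⊆ T` forces `i + T = T`, so the right-hand count is the size of the stabilizer of `T`
  have hstab : #{i | i ∈ T ∧ i + a ∈ T ∧ i + b ∈ T} = #{i : ZMod n | i +ᵥ T = T} := by
    congr 1
    ext i
    have hsub : i +ᵥ T ⊆ T ↔ i ∈ T ∧ i + a ∈ T ∧ i + b ∈ T := by
      simp [T, vadd_finset_insert, insert_subset_iff]
    rw [mem_filter, mem_filter, ← hsub]
    exact and_congr_right fun _ =>
      ⟨fun hs => eq_of_subset_of_card_le hs (card_vadd_finset i T).ge, (·.subset)⟩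
  have hodd := odd_card_vadd_finset_eq_self (by rwa [Nat.card_zmod]) T
  have hval := congrFun h fun i => if i ∈ T then 1 else 0
  rw [mrs_apply_indicator, mrs_apply_indicator, hstab, (ZMod.natCast_eq_one_iff_odd).mpr hodd]
    at hval
  obtain ⟨i, hi⟩ : ({i | i ∈ T ∧ i + c ∈ T ∧ i + d ∈ T} : Finset (ZMod n)).Nonempty := by
    rw [← card_pos, Nat.pos_iff_ne_zero]
    rintro h0
    simp [h0] at hval
  exact ⟨i, (mem_filter.mp hi).2⟩

theorem exists_mrs_of_mem_cubicSet {f : BF n} (hf : f ∈ cubicSet n) :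
    ∃ a b : ZMod n, a ≠ 0 ∧ b ≠ 0 ∧ a ≠ b ∧ f = mrs n a b := by
  obtain ⟨j, k, hj, hjk, hkn, rfl⟩ := hf
  have cast_inj : ∀ p q : ℕ, p < n → q < n → ((p : ZMod n) = q ↔ p = q) := fun p q hp hq => by
    rw [ZMod.natCast_eq_natCast_iff', Nat.mod_eq_of_lt hp, Nat.mod_eq_of_lt hq]
  refine ⟨_, _, ?_, ?_, ?_, cubicMRS_eq_mrs j k⟩
  · rw [← Nat.cast_zero, Ne, cast_inj _ _ (by omega) (NeZero.pos n)]; omega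
  · rw [← Nat.cast_zero, Ne, cast_inj _ _ (by omega) (NeZero.pos n)]; omega
  · rw [Ne, cast_inj _ _ (by omega) (by omega)]; omega

theorem self_mem_orbit (f : BF n) : f ∈ orbit n f :=
  ⟨1, funext fun x => by simp [permAct, sigmaPerm]⟩

theorem ncard_orbit_eq_one {f : BF n} (hf : ∀ u : (ZMod n)ˣ, permAct (sigmaPerm u) f = f) :
    (orbit n f).ncard = 1 := by
  rw [Set.ncard_eq_one]
  exact ⟨f, Set.eq_singleton_iff_unique_mem.mpr ⟨self_mem_orbit f, fun g ⟨u, hg⟩ => hg ▸ hf u⟩⟩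

theorem one_lt_ncard_orbit {f : BF n} (hf : ¬ ∀ u : (ZMod n)ˣ, permAct (sigmaPerm u) f = f) :
    1 < (orbit n f).ncard := by
  obtain ⟨u, hu⟩ := not_forall.mp hf
  exact (Set.one_lt_ncard (Set.toFinite _)).mpr ⟨_, ⟨u, rfl⟩, f, self_mem_orbit f, hu⟩

theorem eq_zero_or_eq_or_eq_two_mul_of_three_mul_eq_zero {m : ℕ} (hn : n = 3 * m) {c : ZMod n}
    (hc : 3 * c = 0) : c = 0 ∨ c = m ∨ c = 2 * m := by
  have hval : n ∣ 3 * c.val := by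
    rw [← ZMod.natCast_eq_zero_iff]; push_cast [ZMod.natCast_zmod_val]; exact hc
  obtain ⟨j, hj⟩ : m ∣ c.val := by
    refine Nat.dvd_of_mul_dvd_mul_left (by norm_num : 0 < 3) ?_
    rwa [← hn]
  have hlt : c.val < 3 * m := by rw [← hn]; exact c.val_lt
  have hj3 : j < 3 := by
    by_contra! h
    nlinarith
  rw [← ZMod.natCast_zmod_val c, hj]
  interval_cases j <;> simp [mul_comm]

end

section
variable {k n : ℕ}

theorem isUnit_natCast_of_coprime_three (hn : n = 3 ^ k) {p : ℕ} (hp : Nat.Coprime p 3) :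
    IsUnit (p : ZMod n) :=
  (ZMod.isUnit_iff_coprime p n).mpr (hn ▸ hp.pow_right k)

theorem three_mul_eq_zero_iff [NeZero n] (hk : 1 ≤ k) (hn : n = 3 ^ k) {c : ZMod n} :
    3 * c = 0 ↔ c = 0 ∨ c = (3 ^ (k - 1) : ℕ) ∨ c = 2 * (3 ^ (k - 1) : ℕ) := by
  have hn' : n = 3 * 3 ^ (k - 1) := by rw [hn, ← pow_succ', Nat.sub_add_cancel hk]
  refine ⟨eq_zero_or_eq_or_eq_two_mul_of_three_mul_eq_zero hn', ?_⟩
  have h3t : (3 : ZMod n) * (3 ^ (k - 1) : ℕ) = 0 := by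
    exact_mod_cast (ZMod.natCast_eq_zero_iff _ n).mpr (dvd_of_eq hn')
  rintro (rfl | rfl | rfl)
  · exact mul_zero 3
  · exact h3t
  · linear_combination 2 * h3t

theorem natCast_three_pow_pred_ne_zero (hk : 1 ≤ k) (hn : n = 3 ^ k) :
    ((3 ^ (k - 1) : ℕ) : ZMod n) ≠ 0 := by
  rw [Ne, ZMod.natCast_eq_zero_iff, hn]
  exact Nat.pow_dvd_pow_iff_le_right'.not.mpr (by omega)

theorem permAct_sigmaPerm_mrs_short [NeZero n] (hk : 1 ≤ k) (hn : n = 3 ^ k) (u : (ZMod n)ˣ) :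
    permAct (sigmaPerm u) (mrs n (3 ^ (k - 1) : ℕ) (2 * (3 ^ (k - 1) : ℕ))) =
      mrs n (3 ^ (k - 1) : ℕ) (2 * (3 ^ (k - 1) : ℕ)) := by
  set t : ZMod n := ((3 ^ (k - 1) : ℕ) : ZMod n)
  have h3t : 3 * t = 0 := (three_mul_eq_zero_iff hk hn).mpr (Or.inr (Or.inl rfl))
  have hut : 3 * (u * t) = 0 := by rw [mul_left_comm, h3t, mul_zero]
  have hut0 : (u : ZMod n) * t ≠ 0 :=
    (Units.mul_right_eq_zero u).not.mpr (natCast_three_pow_pred_ne_zero hk hn)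
  rw [permAct_sigmaPerm_mrs, mul_left_comm]
  rcases (three_mul_eq_zero_iff hk hn).mp hut with h | h | h
  · exact absurd h hut0
  · rw [h]
  · rw [h, mrs_comm, show (2 : ZMod n) * (2 * t) = t by linear_combination h3t]

theorem mrs_eq_short_of_mrs_two_mul [NeZero n] (hk : 1 ≤ k) (hn : n = 3 ^ k) {a b : ZMod n}
    (ha : a ≠ 0) (hb : b ≠ 0) (hab : a ≠ b) (h : mrs n (2 * a) (2 * b) = mrs n a b) :
    mrs n a b = mrs n (3 ^ (k - 1) : ℕ) (2 * (3 ^ (k - 1) : ℕ)) := by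
  set T : Finset (ZMod n) := {0, a, b}
  obtain ⟨i, hi0, hia, hib⟩ :=
    exists_translate_mem_of_mrs_eq (hn ▸ Odd.pow (by decide : Odd 3)) h
  have hmaps : ∀ x ∈ T, i + 2 * x ∈ T := by
    intro x hx
    simp only [T, mem_insert, mem_singleton] at hx
    rcases hx with rfl | rfl | rfl
    exacts [by rwa [mul_zero, add_zero], hia, hib]
  have h56 : IsUnit (56 : ZMod n) := by
    exact_mod_cast isUnit_natCast_of_coprime_three hn (by norm_num : Nat.Coprime 56 3)
  have h3 : ∀ x ∈ T, 3 * (x + i) = 0 := fun x hx => h56.mul_right_eq_zero.mp <| by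
    linear_combination mul_add_eq_zero_of_forall_add_two_mul_mem card_le_three hmaps hx
  have h3i := h3 0 (by simp [T])
  have torsion : ∀ x ∈ T, 3 * x = 0 := fun x hx => by linear_combination h3 x hx - h3i
  rcases (three_mul_eq_zero_iff hk hn).mp (torsion a (by simp [T])) with ha' | ha' | ha' <;>
  rcases (three_mul_eq_zero_iff hk hn).mp (torsion b (by simp [T])) with hb' | hb' | hb' <;>
  simp_all [mrs_comm]

end

/-- For `n = 3^k`, `k ≥ 1`: the short cubic function
`f₁ = (1, 3^{k-1}+1, 2·3^{k-1}+1)` is fixed by every element of `G_n`, and it is the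
only cubic MRS function in `n` variables fixed by every element of `G_n`; equivalently,
its orbit has size 1 and every other orbit has size greater than 1. -/
theorem short_cubic_unique_fixed (k : ℕ) (hk : 1 ≤ k) (n : ℕ) (hn : n = 3 ^ k)
    [NeZero n] :
    (∀ u : (ZMod n)ˣ,
      permAct (sigmaPerm u) (cubicMRS n (3 ^ (k - 1) + 1) (2 * 3 ^ (k - 1) + 1)) =
        cubicMRS n (3 ^ (k - 1) + 1) (2 * 3 ^ (k - 1) + 1)) ∧
    (∀ f ∈ cubicSet n, (∀ u : (ZMod n)ˣ, permAct (sigmaPerm u) f = f) →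
      f = cubicMRS n (3 ^ (k - 1) + 1) (2 * 3 ^ (k - 1) + 1)) ∧
    (orbit n (cubicMRS n (3 ^ (k - 1) + 1) (2 * 3 ^ (k - 1) + 1))).ncard = 1 ∧
    (∀ f ∈ cubicSet n, f ≠ cubicMRS n (3 ^ (k - 1) + 1) (2 * 3 ^ (k - 1) + 1) →
      1 < (orbit n f).ncard) := by
  have hshort : cubicMRS n (3 ^ (k - 1) + 1) (2 * 3 ^ (k - 1) + 1) =
      mrs n (3 ^ (k - 1) : ℕ) (2 * (3 ^ (k - 1) : ℕ)) := by
    rw [cubicMRS_eq_mrs, Nat.add_sub_cancel, Nat.add_sub_cancel, Nat.cast_mul, Nat.cast_ofNat]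
  have fixed : ∀ u : (ZMod n)ˣ,
      permAct (sigmaPerm u) (cubicMRS n (3 ^ (k - 1) + 1) (2 * 3 ^ (k - 1) + 1)) =
        cubicMRS n (3 ^ (k - 1) + 1) (2 * 3 ^ (k - 1) + 1) := fun u => by
    rw [hshort, permAct_sigmaPerm_mrs_short hk hn]
  have unique : ∀ f ∈ cubicSet n, (∀ u : (ZMod n)ˣ, permAct (sigmaPerm u) f = f) →
      f = cubicMRS n (3 ^ (k - 1) + 1) (2 * 3 ^ (k - 1) + 1) := by
    rintro f hf hfix
    obtain ⟨a, b, ha, hb, hab, rfl⟩ := exists_mrs_of_mem_cubicSet hf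
    have h2 := hfix (isUnit_natCast_of_coprime_three hn (by norm_num : Nat.Coprime 2 3)).unit
    rw [permAct_sigmaPerm_mrs, IsUnit.unit_spec, Nat.cast_ofNat] at h2
    rw [hshort, mrs_eq_short_of_mrs_two_mul hk hn ha hb hab h2]
  exact ⟨fixed, unique, ncard_orbit_eq_one fixed,
    fun f hf hne => one_lt_ncard_orbit (mt (unique f hf) hne)⟩
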